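/- Let χ̃ : [0,∞)ⁿ → ℝ be smooth with (∂χ̃/∂r_j)(0) > 0 for all j, and for z ∈ ℂⁿ set r = (|z_1|²,…,|z_n|²) and H(z)_{jk} = (∂χ̃/∂r_j)(r) δ_{jk} + z̄_j z_k (∂²χ̃/∂r_j∂r_k)(r). Then there exist ε > 0 and real-valued functions V_{jk}(r_1,…,r_n), smooth on a neighborhood of 0 in [0,∞)ⁿ, such that for all z with |z| < ε the matrix H(z) is invertible and the transpose of its inverse is given by (H(z)^{-T})_{jk} = ((∂χ̃/∂r_j)(r))^{-1} δ_{jk} + V_{jk}(r) z_j z̄_k. -/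

import Mathlib

/-!
Write `D = diag(∂χ̃/∂rⱼ)`, `M = (∂²χ̃/∂rⱼ∂rₖ)` and `Z = diag(z)`, so that `H = D + Z̄ M Z` and
`Z Z̄ = diag(r)`. Looking for the inverse in the form `D⁻¹ + Z̄ V₀ Z`, the product
`(D + Z̄ M Z)(D⁻¹ + Z̄ V₀ Z)` equals `1 + Z̄ ((D + M diag(r)) V₀ + M D⁻¹) Z`, so it suffices that
`V₀ = -(D + M diag(r))⁻¹ M D⁻¹`. This real matrix depends smoothly on `r` wherever
`D + M diag(r)` and `D` are invertible, which holds near `r = 0` because there the matrix is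
`D(0)`, a diagonal matrix with positive entries. Transposing gives `V = V₀ᵀ`.
-/

open Complex MeasureTheory Finset

noncomputable section

/-- Partial derivative `∂f/∂rⱼ` of a function `f : ℝⁿ → ℝ`. -/
def pderiv' {n : ℕ} (f : (Fin n → ℝ) → ℝ) (j : Fin n) (r : Fin n → ℝ) : ℝ :=
  fderiv ℝ f r (Pi.single j 1)

/-- The radii `r = (|z₁|², …, |zₙ|²)`. -/
def rad {n : ℕ} (z : Fin n → ℂ) : Fin n → ℝ := fun i => Complex.normSq (z i)

/-- The Kähler metric `H(z)ⱼₖ = (∂χ̃/∂rⱼ) δⱼₖ + z̄ⱼ zₖ ∂²χ̃/∂rⱼ∂rₖ` induced by a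
multi-radial potential `χ̃`. -/
def radialMetric {n : ℕ} (χ : (Fin n → ℝ) → ℝ) (z : Fin n → ℂ) :
    Matrix (Fin n) (Fin n) ℂ := fun j k =>
  ((pderiv' χ j (rad z) : ℝ) : ℂ) * (if j = k then 1 else 0) +
    (starRingEnd ℂ) (z j) * z k * ((pderiv' (pderiv' χ j) k (rad z) : ℝ) : ℂ)

open scoped ContDiff Matrix

section MatrixSmoothness

variable {𝕜 E : Type*} [NontriviallyNormedField 𝕜] [NormedAddCommGroup E] [NormedSpace 𝕜 E]
  {s : Set E} {k : WithTop ℕ∞}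

theorem ContDiffOn.matrix_diagonal_apply {m : Type*} [DecidableEq m] {d : m → E → 𝕜}
    (hd : ∀ i, ContDiffOn 𝕜 k (d i) s) (i j : m) :
    ContDiffOn 𝕜 k (fun x => Matrix.diagonal (fun l => d l x) i j) s := by
  rcases eq_or_ne i j with rfl | hij
  · simpa using hd i
  · simpa [hij] using contDiffOn_const

theorem ContDiffOn.matrix_mul_apply {m p q : Type*} [Fintype p] {f : E → Matrix m p 𝕜}
    {g : E → Matrix p q 𝕜} (hf : ∀ i j, ContDiffOn 𝕜 k (fun x => f x i j) s)
    (hg : ∀ i j, ContDiffOn 𝕜 k (fun x => g x i j) s) (i : m) (j : q) :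
    ContDiffOn 𝕜 k (fun x => (f x * g x) i j) s := by
  simp only [Matrix.mul_apply]
  exact ContDiffOn.sum fun l _ => (hf i l).mul (hg l j)

theorem ContDiffOn.matrix_det {m : Type*} [Fintype m] [DecidableEq m] {f : E → Matrix m m 𝕜}
    (hf : ∀ i j, ContDiffOn 𝕜 k (fun x => f x i j) s) :
    ContDiffOn 𝕜 k (fun x => (f x).det) s := by
  simp only [Matrix.det_apply']
  exact ContDiffOn.sum fun σ _ => contDiffOn_const.mul (contDiffOn_prod fun i _ => hf (σ i) i)

theorem ContDiffOn.matrix_inv_apply [CompleteSpace 𝕜] {m : Type*} [Fintype m] [DecidableEq m]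
    {f : E → Matrix m m 𝕜} (hf : ∀ i j, ContDiffOn 𝕜 k (fun x => f x i j) s)
    (hdet : ∀ x ∈ s, (f x).det ≠ 0) (i j : m) : ContDiffOn 𝕜 k (fun x => (f x)⁻¹ i j) s := by
  simp only [Matrix.inv_def, Ring.inverse_eq_inv', Matrix.smul_apply, smul_eq_mul,
    Matrix.adjugate_apply]
  refine ((ContDiffOn.matrix_det hf).inv hdet).mul (ContDiffOn.matrix_det fun a b => ?_)
  rcases eq_or_ne a j with rfl | haj
  · simpa using contDiffOn_const
  · simpa [Matrix.updateRow_apply, haj] using hf a b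

end MatrixSmoothness

theorem add_mul_mul_mul_add_mul_mul_eq_one {R : Type*} [Ring R] {a a' w z m v : R}
    (ha : a * a' = 1) (haw : Commute a w) (hza : Commute z a')
    (hv : (a + m * (z * w)) * v = -(m * a')) :
    (a + w * m * z) * (a' + w * v * z) = 1 := by
  have hexpand : (a + w * m * z) * (a' + w * v * z) =
      a * a' + w * ((a + m * (z * w)) * v + m * a') * z := by
    simp only [add_mul, mul_add, ← mul_assoc, haw.eq]
    rw [mul_assoc (w * m) z a', hza.eq, ← mul_assoc]
    abel
  rw [hexpand, ha, hv, neg_add_cancel, mul_zero, zero_mul, add_zero]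

section RadialMetric

variable {n : ℕ} (χ : (Fin n → ℝ) → ℝ)

def radialGrad (r : Fin n → ℝ) : Fin n → ℝ := fun j => pderiv' χ j r

def radialHessian (r : Fin n → ℝ) : Matrix (Fin n) (Fin n) ℝ :=
  Matrix.of fun j k => pderiv' (pderiv' χ j) k r

/-- `H(z)` conjugated by `diag(z̄)`, when all `zⱼ ≠ 0`. -/
def reducedMetric (r : Fin n → ℝ) : Matrix (Fin n) (Fin n) ℝ :=
  Matrix.diagonal (radialGrad χ r) + radialHessian χ r * Matrix.diagonal r

def inverseCorrection (r : Fin n → ℝ) : Matrix (Fin n) (Fin n) ℝ :=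
  -((reducedMetric χ r)⁻¹ * radialHessian χ r * Matrix.diagonal (radialGrad χ r)⁻¹)

def IsRegularRadius (r : Fin n → ℝ) : Prop :=
  (reducedMetric χ r).det ≠ 0 ∧ ∀ j, radialGrad χ r j ≠ 0

variable {χ}

theorem contDiff_pderiv' (hχ : ContDiff ℝ ∞ χ) (j : Fin n) : ContDiff ℝ ∞ (pderiv' χ j) :=
  (ContinuousLinearMap.apply ℝ ℝ (Pi.single j 1)).contDiff.comp
    (hχ.fderiv_right (by exact_mod_cast le_top))

theorem contDiffOn_reducedMetric_apply (hχ : ContDiff ℝ ∞ χ) (s : Set (Fin n → ℝ))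
    (i j : Fin n) : ContDiffOn ℝ ∞ (fun r => reducedMetric χ r i j) s := by
  simp only [reducedMetric, Matrix.add_apply]
  exact (ContDiffOn.matrix_diagonal_apply (fun l => (contDiff_pderiv' hχ l).contDiffOn) i j).add
    (ContDiffOn.matrix_mul_apply
      (fun a b => (contDiff_pderiv' (contDiff_pderiv' hχ a) b).contDiffOn)
      (ContDiffOn.matrix_diagonal_apply fun l => (contDiff_apply ℝ ℝ l).contDiffOn) i j)

theorem eventually_isRegularRadius (hχ : ContDiff ℝ ∞ χ) (hχpos : ∀ j, 0 < pderiv' χ j 0) :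
    ∀ᶠ r in nhds 0, IsRegularRadius χ r := by
  have hdet : Continuous fun r => (reducedMetric χ r).det :=
    continuousOn_univ.1
      (ContDiffOn.matrix_det (contDiffOn_reducedMetric_apply hχ Set.univ)).continuousOn
  have hdet0 : (reducedMetric χ 0).det ≠ 0 := by
    rw [reducedMetric, show Matrix.diagonal (0 : Fin n → ℝ) = 0 from Matrix.diagonal_zero,
      Matrix.mul_zero, add_zero, Matrix.det_diagonal]
    exact (Finset.prod_pos fun j _ => hχpos j).ne'
  exact (hdet.continuousAt.eventually_ne hdet0).and (Filter.eventually_all.2 fun j =>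
    (contDiff_pderiv' hχ j).continuous.continuousAt.eventually_ne (hχpos j).ne')

theorem contDiffOn_inverseCorrection_apply (hχ : ContDiff ℝ ∞ χ)
    {s : Set (Fin n → ℝ)} (hs : ∀ r ∈ s, IsRegularRadius χ r) (i j : Fin n) :
    ContDiffOn ℝ ∞ (fun r => inverseCorrection χ r i j) s := by
  simp only [inverseCorrection, Matrix.neg_apply]
  refine (ContDiffOn.matrix_mul_apply (ContDiffOn.matrix_mul_apply
    (ContDiffOn.matrix_inv_apply (contDiffOn_reducedMetric_apply hχ s) fun r hr => (hs r hr).1)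
    (fun a b => (contDiff_pderiv' (contDiff_pderiv' hχ a) b).contDiffOn))
    (ContDiffOn.matrix_diagonal_apply fun l =>
      (contDiff_pderiv' hχ l).contDiffOn.inv fun r hr => (hs r hr).2 l) i j).neg

theorem reducedMetric_mul_inverseCorrection {r : Fin n → ℝ} (hr : IsRegularRadius χ r) :
    reducedMetric χ r * inverseCorrection χ r =
      -(radialHessian χ r * Matrix.diagonal (radialGrad χ r)⁻¹) := by
  rw [inverseCorrection, mul_neg, ← Matrix.mul_assoc, ← Matrix.mul_assoc,
    Matrix.mul_nonsing_inv _ (Ne.isUnit hr.1), Matrix.one_mul]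

theorem radialMetric_eq (z : Fin n → ℂ) :
    radialMetric χ z = ofRealHom.mapMatrix (Matrix.diagonal (radialGrad χ (rad z))) +
      Matrix.diagonal (star z) * ofRealHom.mapMatrix (radialHessian χ (rad z)) *
        Matrix.diagonal z := by
  ext j k
  simp only [radialMetric, Matrix.add_apply, Matrix.mul_diagonal, Matrix.diagonal_mul,
    RingHom.mapMatrix_apply, Matrix.map_apply, Matrix.diagonal_apply, radialGrad, radialHessian,
    Matrix.of_apply, Pi.star_apply, Complex.star_def]
  split_ifs <;> simp only [ofRealHom_eq_coe, ofReal_zero, mul_one, mul_zero] <;> ring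

theorem radialMetric_mul_eq_one {z : Fin n → ℂ} (hz : IsRegularRadius χ (rad z)) :
    radialMetric χ z * (ofRealHom.mapMatrix (Matrix.diagonal (radialGrad χ (rad z))⁻¹) +
      Matrix.diagonal (star z) * ofRealHom.mapMatrix (inverseCorrection χ (rad z)) *
        Matrix.diagonal z) = 1 := by
  have hdiag : ∀ d : Fin n → ℝ,
      ofRealHom.mapMatrix (Matrix.diagonal d) = Matrix.diagonal fun i => (d i : ℂ) := fun d =>
    Matrix.diagonal_map (map_zero _)
  have hgrad : Matrix.diagonal (radialGrad χ (rad z)) * Matrix.diagonal (radialGrad χ (rad z))⁻¹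
      = 1 := by
    rw [Matrix.diagonal_mul_diagonal, ← Matrix.diagonal_one]
    exact congrArg _ (funext fun i => mul_inv_cancel₀ (hz.2 i))
  have hrad : Matrix.diagonal z * Matrix.diagonal (star z) =
      ofRealHom.mapMatrix (Matrix.diagonal (rad z)) := by
    rw [Matrix.diagonal_mul_diagonal, hdiag]
    exact congrArg _ (funext fun i => Complex.mul_conj (z i))
  rw [radialMetric_eq]
  refine add_mul_mul_mul_add_mul_mul_eq_one ?_ ?_ ?_ ?_
  · rw [← map_mul, hgrad, map_one]
  · rw [hdiag]; exact Matrix.commute_diagonal _ _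
  · rw [hdiag]; exact Matrix.commute_diagonal _ _
  · rw [hrad, ← map_mul, ← map_add, ← map_mul, ← map_mul, ← map_neg]
    exact congrArg _ (reducedMetric_mul_inverseCorrection hz)

end RadialMetric

theorem stmt9 (n : ℕ) (χ : (Fin n → ℝ) → ℝ) (hχ : ContDiff ℝ (⊤ : ℕ∞) χ)
    (hχpos : ∀ j : Fin n, 0 < pderiv' χ j 0) :
    ∃ ε > (0 : ℝ), ∃ V : (Fin n → ℝ) → Matrix (Fin n) (Fin n) ℝ,
      (∀ j k : Fin n,
        ContDiffOn ℝ (⊤ : ℕ∞) (fun r => V r j k) {r : Fin n → ℝ | ∀ i, |r i| < ε}) ∧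
      (∀ z : Fin n → ℂ, (∀ i, Complex.normSq (z i) < ε) →
        IsUnit (radialMetric χ z) ∧
        ∀ j k : Fin n,
          ((radialMetric χ z)⁻¹).transpose j k =
            (((pderiv' χ j (rad z))⁻¹ : ℝ) : ℂ) * (if j = k then 1 else 0) +
              ((V (rad z) j k : ℝ) : ℂ) * z j * (starRingEnd ℂ) (z k)) := by
  obtain ⟨ε, hε, hball⟩ := Metric.eventually_nhds_iff.1 (eventually_isRegularRadius hχ hχpos)
  have hreg : ∀ r ∈ {r : Fin n → ℝ | ∀ i, |r i| < ε}, IsRegularRadius χ r := fun r hr =>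
    hball (by simpa [dist_zero_right, pi_norm_lt_iff hε] using hr)
  refine ⟨ε, hε, fun r => (inverseCorrection χ r)ᵀ,
    fun j k => contDiffOn_inverseCorrection_apply hχ hreg k j, fun z hz => ?_⟩
  have hmul := radialMetric_mul_eq_one (hreg (rad z) fun i => by
    simpa [rad, abs_of_nonneg (normSq_nonneg (z i))] using hz i)
  refine ⟨(Matrix.isUnit_iff_isUnit_det _).2 (Matrix.isUnit_det_of_right_inverse hmul),
    fun j k => ?_⟩
  rw [Matrix.transpose_apply, Matrix.inv_eq_right_inv hmul]
  simp only [Matrix.add_apply, Matrix.mul_diagonal, Matrix.diagonal_mul, RingHom.mapMatrix_apply,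
    Matrix.map_apply, Matrix.diagonal_apply, eq_comm (a := k), Pi.inv_apply, radialGrad,
    Matrix.transpose_apply, Pi.star_apply, Complex.star_def, ofRealHom_eq_coe]
  split_ifs with hjk <;> simp only [hjk, ofReal_zero, mul_one, mul_zero, zero_add] <;> ring
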